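/- Let A be a measurable set with μ(A) = ∞ and let (A_n)_{n≥1} be a sequence of measurable sets with μ(A_n) < ∞ for every n, such that (A_n) →_μ A and, for all n < m: μ(A_n \ A_m) ≤ 2^{-n}, μ((A_m ∩ C_n) \ A_n) ≤ 2^{-n}, and μ(A_n) ≥ 2^n. Then μ(A △ liminf_n A_n) = 0 and μ(A △ limsup_n A_n) = 0, where △ denotes symmetric difference, liminf_n A_n = ⋃_n ⋂_{m≥n} A_m and limsup_n A_n = ⋂_n ⋃_{m≥n} A_m. -/

import Mathlib

open MeasureTheory Filter Set
open scoped ENNReal Topology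

/-!
Drop `A 0`, since the bounds start at `n = 1`; then `∑ μ (A n \ A (n+1)) < ∞`. Letting `m → ∞` in
`μ (A n \ A) ≤ μ (A n \ A m) + μ (A m \ A)` gives `μ (A n \ A) ≤ 2⁻ⁿ`, so by Borel–Cantelli
`limsup A n \ A` is null. By Borel–Cantelli again, almost every point that lies in `A n` for some
large `n` stays in all later `A m`; so off a null set a point outside `liminf A n` lies outside
`A m` for all large `m`, and inside a set `B` of finite measure such points form a null set since
`μ ((A ∩ B) \ A m) → 0`. The `C k` cover `Ω` by sets of finite measure, so `A \ liminf A n` is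
null, and `liminf A n ⊆ limsup A n` does the rest.
-/

/-- The limit relation `→_μ`: `(A n) →_μ L` iff `μ (A n \ L) → 0` and, for every
measurable `B` of finite measure, `μ ((L ∩ B) \ A n) → 0`. -/
def ConvMu {Ω : Type*} [MeasurableSpace Ω] (μ : Measure Ω)
    (A : ℕ → Set Ω) (L : Set Ω) : Prop :=
  Tendsto (fun n => μ (A n \ L)) atTop (nhds 0) ∧
    ∀ B : Set Ω, MeasurableSet B → μ B < ⊤ →
      Tendsto (fun n => μ ((L ∩ B) \ A n)) atTop (nhds 0)

theorem limsup_sdiff_subset_limsup_sdiff_succ_union_liminf {α : Type*} (s : ℕ → Set α)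
    (t : Set α) :
    limsup (fun n => t \ s n) atTop ⊆
      limsup (fun n => s n \ s (n + 1)) atTop ∪ liminf (fun n => t \ s n) atTop := by
  intro x hx
  simp only [mem_union, mem_limsup_iff_frequently_mem, mem_liminf_iff_eventually_mem,
    Set.mem_sdiff] at hx ⊢
  refine or_iff_not_imp_left.2 fun hstay => ?_
  obtain ⟨N, hN⟩ := eventually_atTop.1 (not_frequently.1 hstay)
  obtain ⟨-, hxt, -⟩ := hx.exists
  have hstays : ∀ n ≥ N, x ∈ s n → ∀ m ≥ n, x ∈ s m := fun n hn hxn m hm =>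
    Nat.le_induction hxn (fun k hk hxk => not_not.1 fun h => hN k (hn.trans hk) ⟨hxk, h⟩) m hm
  filter_upwards [eventually_ge_atTop N] with n hn
  refine ⟨hxt, fun hxn => ?_⟩
  obtain ⟨m, hm, -, hxm⟩ := frequently_atTop.1 hx n
  exact hxm (hstays n hn hxn m hm)

section

variable {Ω : Type*} [MeasurableSpace Ω] {μ : Measure Ω}

theorem measure_liminf_atTop_eq_zero_of_tendsto {s : ℕ → Set Ω}
    (hs : Tendsto (fun n => μ (s n)) atTop (𝓝 0)) : μ (liminf s atTop) = 0 := by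
  rw [liminf_eq_iSup_iInf_of_nat]
  refine measure_iUnion_null fun n => le_antisymm (ge_of_tendsto hs ?_) bot_le
  filter_upwards [eventually_ge_atTop n] with m hm
  exact measure_mono (biInter_subset_of_mem hm)

theorem measure_sdiff_liminf_eq_zero {s : ℕ → Set Ω} {t : Set Ω}
    (hsum : ∑' n, μ (s n \ s (n + 1)) ≠ ∞) (ht : Tendsto (fun n => μ (t \ s n)) atTop (𝓝 0)) :
    μ (t \ liminf s atTop) = 0 := by
  rw [sdiff_liminf]
  exact measure_mono_null (limsup_sdiff_subset_limsup_sdiff_succ_union_liminf s t)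
    (measure_union_null (measure_limsup_atTop_eq_zero hsum)
      (measure_liminf_atTop_eq_zero_of_tendsto ht))

namespace ConvMu

variable {s : ℕ → Set Ω} {L : Set Ω}

theorem comp_add_right (h : ConvMu μ s L) (k : ℕ) : ConvMu μ (fun n => s (n + k)) L :=
  ⟨h.1.comp (tendsto_add_atTop_nat k),
    fun B hB hBfin => (h.2 B hB hBfin).comp (tendsto_add_atTop_nat k)⟩

theorem measure_sdiff_le {u : Set Ω} {ε : ℝ≥0∞} (h : ConvMu μ s L)
    (hu : ∀ᶠ n in atTop, μ (u \ s n) ≤ ε) : μ (u \ L) ≤ ε := by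
  have hlim : Tendsto (fun n => ε + μ (s n \ L)) atTop (𝓝 ε) := by
    simpa using tendsto_const_nhds.add h.1
  refine ge_of_tendsto hlim ?_
  filter_upwards [hu] with n hn
  calc μ (u \ L) ≤ μ (u \ s n) + μ (s n \ L) :=
        (measure_mono (sdiff_triangle u (s n) L)).trans (measure_union_le _ _)
    _ ≤ ε + μ (s n \ L) := by gcongr

theorem measure_sdiff_liminf_eq_zero (h : ConvMu μ s L) {C : ℕ → Set Ω}
    (hCmeas : ∀ k, MeasurableSet (C k)) (hCfin : ∀ k, μ (C k) < ⊤) (hCunion : ⋃ k, C k = univ)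
    (hsum : ∑' n, μ (s n \ s (n + 1)) ≠ ∞) : μ (L \ liminf s atTop) = 0 := by
  have hcover : L \ liminf s atTop ⊆ ⋃ k, (L ∩ C k) \ liminf s atTop := by
    intro x hx
    obtain ⟨k, hk⟩ := mem_iUnion.1 (hCunion ▸ mem_univ x : x ∈ ⋃ k, C k)
    exact mem_iUnion.2 ⟨k, ⟨hx.1, hk⟩, hx.2⟩
  exact measure_mono_null hcover <| measure_iUnion_null fun k =>
    _root_.measure_sdiff_liminf_eq_zero hsum (h.2 (C k) (hCmeas k) (hCfin k))

end ConvMu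

end

theorem statement2_general {Ω : Type*} [MeasurableSpace Ω] (μ : Measure Ω)
    (C : ℕ → Set Ω) (hCmeas : ∀ n, MeasurableSet (C n)) (hCfin : ∀ n, μ (C n) < ⊤)
    (hCunion : (⋃ n, C n) = Set.univ)
    (A : Set Ω)
    (Aseq : ℕ → Set Ω)
    (hconv : ConvMu μ Aseq A)
    (hc1 : ∀ n m, 1 ≤ n → n < m → μ (Aseq n \ Aseq m) ≤ (2 : ℝ≥0∞)⁻¹ ^ n) :
    μ (symmDiff A (⋃ n, ⋂ m, ⋂ _ : n ≤ m, Aseq m)) = 0 ∧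
    μ (symmDiff A (⋂ n, ⋃ m, ⋃ _ : n ≤ m, Aseq m)) = 0 := by
  set B : ℕ → Set Ω := fun n => Aseq (n + 1)
  have hB : ConvMu μ B A := hconv.comp_add_right 1
  have hBstep : ∀ n m, n < m → μ (B n \ B m) ≤ (2 : ℝ≥0∞)⁻¹ ^ (n + 1) := fun n m hnm =>
    hc1 (n + 1) (m + 1) n.succ_pos (Nat.succ_lt_succ hnm)
  have hgeom : ∑' n, (2 : ℝ≥0∞)⁻¹ ^ (n + 1) ≠ ∞ := by
    simp [ENNReal.tsum_geometric_add_one, ENNReal.one_sub_inv_two]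
  have hBA : ∀ n, μ (B n \ A) ≤ (2 : ℝ≥0∞)⁻¹ ^ (n + 1) := fun n =>
    hB.measure_sdiff_le ((eventually_gt_atTop n).mono fun m hm => hBstep n m hm)
  have hsup : μ (limsup B atTop \ A) = 0 := by
    rw [limsup_sdiff]
    exact measure_limsup_atTop_eq_zero (ne_top_of_le_ne_top hgeom (ENNReal.tsum_le_tsum hBA))
  have hinf : μ (A \ liminf B atTop) = 0 :=
    hB.measure_sdiff_liminf_eq_zero hCmeas hCfin hCunion
      (ne_top_of_le_ne_top hgeom (ENNReal.tsum_le_tsum fun n => hBstep n (n + 1) n.lt_succ_self))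
  have hle : liminf B atTop ⊆ limsup B atTop := liminf_le_limsup
  have hliminf : (⋃ n, ⋂ m, ⋂ _ : n ≤ m, Aseq m) = liminf B atTop := by
    rw [liminf_nat_add, liminf_eq_iSup_iInf_of_nat]; rfl
  have hlimsup : (⋂ n, ⋃ m, ⋃ _ : n ≤ m, Aseq m) = limsup B atTop := by
    rw [limsup_nat_add, limsup_eq_iInf_iSup_of_nat]; rfl
  rw [hliminf, hlimsup, measure_symmDiff_eq_zero_iff, measure_symmDiff_eq_zero_iff, ae_eq_set,
    ae_eq_set]
  exact ⟨⟨hinf, measure_mono_null (sdiff_subset_sdiff_left hle) hsup⟩,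
    measure_mono_null (sdiff_subset_sdiff_right hle) hinf, hsup⟩

/-- Let `(C n)` be increasing with `C 0 = ∅`, `μ (C n) < ∞`,
`μ (C (n+1) \ C n) ≥ 2^(n+1)` and `⋃ n, C n = Ω`.  If `μ A = ∞`, each `μ (A n) < ∞`,
`(A n) →_μ A`, and for all `1 ≤ n < m`: `μ (A n \ A m) ≤ 2⁻ⁿ`,
`μ ((A m ∩ C n) \ A n) ≤ 2⁻ⁿ` and `μ (A n) ≥ 2ⁿ`, then `A` equals both
`liminf A n` and `limsup A n` up to `μ`-null sets. -/
theorem statement2 {Ω : Type*} [MeasurableSpace Ω] (μ : Measure Ω)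
    (C : ℕ → Set Ω) (hCmeas : ∀ n, MeasurableSet (C n)) (hCmono : Monotone C)
    (hC0 : C 0 = ∅) (hCfin : ∀ n, μ (C n) < ⊤)
    (hCgrow : ∀ n, (2 : ℝ≥0∞) ^ (n + 1) ≤ μ (C (n + 1) \ C n))
    (hCunion : (⋃ n, C n) = Set.univ)
    (A : Set Ω) (hA : MeasurableSet A) (hAinf : μ A = ⊤)
    (Aseq : ℕ → Set Ω) (hAseq : ∀ n, MeasurableSet (Aseq n))
    (hAseqfin : ∀ n, μ (Aseq n) < ⊤)
    (hconv : ConvMu μ Aseq A)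
    (hc1 : ∀ n m, 1 ≤ n → n < m → μ (Aseq n \ Aseq m) ≤ (2 : ℝ≥0∞)⁻¹ ^ n)
    (hc2 : ∀ n m, 1 ≤ n → n < m → μ ((Aseq m ∩ C n) \ Aseq n) ≤ (2 : ℝ≥0∞)⁻¹ ^ n)
    (hc3 : ∀ n, 1 ≤ n → (2 : ℝ≥0∞) ^ n ≤ μ (Aseq n)) :
    μ (symmDiff A (⋃ n, ⋂ m, ⋂ _ : n ≤ m, Aseq m)) = 0 ∧
    μ (symmDiff A (⋂ n, ⋃ m, ⋃ _ : n ≤ m, Aseq m)) = 0 :=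
  statement2_general μ C hCmeas hCfin hCunion A Aseq hconv hc1
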